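/- arXiv:2601.08727 — 3 statements merged into one kernel-verified Lean document; each statement's English description precedes it below -/
import Mathlib

section
/- Let f: {0,1}^n → {0,1} be a nonconstant Boolean function, let p be a nondeterministic representation of f, and let q be a nondeterministic representation of ¬f (the pointwise negation of f). Then either p has a hitting set of size at most 2·deg(p)·sdeg(f)^2, or q has a hitting set of size at most 2·deg(q)·sdeg(f)^2. -/
open MvPolynomial

/-- A real multivariate polynomial is multilinear if every variable occurs with degree ≤ 1. -/
def Multilinear {σ : Type*} (p : MvPolynomial σ ℝ) : Prop :=
  ∀ i, MvPolynomial.degreeOf i p ≤ 1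

/-- Evaluation of a polynomial at a Boolean point (true ↦ 1, false ↦ 0). -/
noncomputable def evalB {σ : Type*} (x : σ → Bool) (p : MvPolynomial σ ℝ) : ℝ :=
  MvPolynomial.eval (fun i => if x i then (1:ℝ) else 0) p

/-- The real value of a Boolean (true ↦ 1, false ↦ 0). -/
def bval (b : Bool) : ℝ := if b then 1 else 0

/-- The sign degree of a Boolean function: the minimum degree of a multilinear real
polynomial that is nonzero on the cube and negative exactly on f⁻¹(1). -/
noncomputable def sdeg {n : ℕ} (f : (Fin n → Bool) → Bool) : ℕ :=
  sInf {d | ∃ p : MvPolynomial (Fin n) ℝ, Multilinear p ∧ (∀ x, evalB x p ≠ 0) ∧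
    (∀ x, evalB x p < 0 ↔ f x = true) ∧ p.totalDegree = d}

/-- `M` is a maxonomial of `p`: a monomial of maximal (total) degree with nonzero coefficient. -/
def IsMaxonomial {n : ℕ} (p : MvPolynomial (Fin n) ℝ) (M : Finset (Fin n)) : Prop :=
  M.card = p.totalDegree ∧ MvPolynomial.coeff (∑ i ∈ M, Finsupp.single i 1) p ≠ 0

/-- `H` is a hitting set of `p`: it intersects every maxonomial of `p`. -/
def IsHittingSet {n : ℕ} (p : MvPolynomial (Fin n) ℝ) (H : Finset (Fin n)) : Prop :=
  ∀ M, IsMaxonomial p M → (H ∩ M).Nonempty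

/-!
Fix a sign representation `r` of `f` of degree `sdeg f` and a point `x` where `|r|` is largest;
trading `(f, p, r)` for `(¬f, q, -r)` if necessary, `r x > 0` and hence `f x = 0`. Take a maximal
family `F` of pairwise disjoint blocks `B`, each minimal with `f (x ⊕ B) = 1`. By maximality the
union `H` of `F` is a certificate for `f x = 0`, so `H` hits every maxonomial `M` of `p`: the
alternating sum of `p` over the subcube through `x` spanned by `M` is `±` the coefficient of `M`,
hence nonzero, so `p ≠ 0` somewhere on that subcube. The same alternating sum over a minimal block
`B` equals `±p (x ⊕ B) ≠ 0`, and it vanishes once `|B| > deg p`; thus `|H| ≤ |F| · deg p`. Finally,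
flipping every block of `F` independently with probability `t` averages `r` into a polynomial in
`t` of degree at most `deg r`, bounded by `r x` on `[0, 1]`, with derivative at `0` below
`-|F| · r x`. Markov's inequality gives `|F| < 2 (deg r)²`.
-/

namespace Polynomial

theorem abs_derivative_eval_one_le_of_abs_eval_le {P : ℝ[X]} {s : ℕ} {M : ℝ}
    (hP : P.natDegree ≤ s) (hM : 0 < M) (hb : ∀ x ∈ Set.Icc (-1 : ℝ) 1, |P.eval x| ≤ M) :
    |(derivative P).eval 1| ≤ s ^ 2 * M := by
  have markov : ∀ Q : ℝ[X], Q.natDegree ≤ s → (∀ x ∈ Set.Icc (-1 : ℝ) 1, |Q.eval x| ≤ 1) →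
      (derivative Q).eval 1 ≤ s ^ 2 := fun Q hQ hQb => by
    simpa [Chebyshev.derivative_T_eval_one] using
      Chebyshev.eval_iterate_derivative_le_of_forall_abs_le_one (k := 1) le_rfl
        (degree_le_of_natDegree_le hQ) hQb
  have hQ : (C M⁻¹ * P).natDegree ≤ s := (natDegree_C_mul_le _ _).trans hP
  have hQb : ∀ x ∈ Set.Icc (-1 : ℝ) 1, |(C M⁻¹ * P).eval x| ≤ 1 := fun x hx => by
    rw [eval_mul, eval_C, abs_mul, abs_inv, abs_of_pos hM, inv_mul_le_iff₀ hM, mul_one]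
    exact hb x hx
  have h₁ := markov _ hQ hQb
  have h₂ := markov (-(C M⁻¹ * P)) (by rwa [natDegree_neg]) (by simpa using hQb)
  simp only [derivative_mul, derivative_C, zero_mul, zero_add, eval_mul, eval_C,
    derivative_neg, eval_neg] at h₁ h₂
  have h : |M⁻¹ * (derivative P).eval 1| ≤ s ^ 2 := abs_le.mpr ⟨by linarith, h₁⟩
  rwa [abs_mul, abs_inv, abs_of_pos hM, inv_mul_le_iff₀ hM, mul_comm] at h

theorem abs_coeff_one_le_of_abs_eval_le {P : ℝ[X]} {s : ℕ} {M : ℝ} (hP : P.natDegree ≤ s)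
    (hM : 0 < M) (hb : ∀ t ∈ Set.Icc (0 : ℝ) 1, |P.eval t| ≤ M) :
    |P.coeff 1| ≤ 2 * s ^ 2 * M := by
  set q : ℝ[X] := C 2⁻¹ * (1 - X)
  have hq : q.natDegree ≤ 1 :=
    (natDegree_C_mul_le _ _).trans ((natDegree_sub_le _ _).trans (by simp))
  have hQ : (P.comp q).natDegree ≤ s :=
    natDegree_comp_le.trans (by simpa using Nat.mul_le_mul hP hq)
  have hQb : ∀ x ∈ Set.Icc (-1 : ℝ) 1, |(P.comp q).eval x| ≤ M := fun x hx => by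
    rw [eval_comp]
    exact hb _ ⟨by simp [q]; linarith [hx.2], by simp [q]; linarith [hx.1]⟩
  have hder : (derivative (P.comp q)).eval 1 = -2⁻¹ * P.coeff 1 := by
    simp [q, derivative_comp, ← coeff_zero_eq_eval_zero, coeff_derivative]
  have := abs_derivative_eval_one_le_of_abs_eval_le hQ hM hQb
  rw [hder, abs_mul] at this
  norm_num at this
  linarith

lemma coeff_one_one_sub_X_pow (b : ℕ) : ((1 - X) ^ b : ℝ[X]).coeff 1 = -(b : ℝ) := by
  induction b with
  | zero => simp [coeff_one]
  | succ b ih =>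
    rw [pow_succ, mul_sub, mul_one, coeff_sub, coeff_mul_X, ih, coeff_zero_eq_eval_zero,
      eval_pow, eval_sub, eval_one, eval_X, sub_zero, one_pow]
    push_cast
    ring

lemma coeff_one_X_pow_mul_one_sub_X_pow (a b : ℕ) :
    (X ^ a * (1 - X) ^ b : ℝ[X]).coeff 1 =
      if a = 0 then -(b : ℝ) else if a = 1 then 1 else 0 := by
  rw [coeff_X_pow_mul']
  rcases a with _ | _ | a
  · simp [coeff_one_one_sub_X_pow]
  · simp [coeff_zero_eq_eval_zero]
  · simp

end Polynomial

section BooleanCube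

variable {σ : Type*}

lemma evalB_eq_sum [Fintype σ] (x : σ → Bool) (p : MvPolynomial σ ℝ) :
    evalB x p = ∑ m ∈ p.support, coeff m p * ∏ i, bval (x i) ^ m i :=
  eval_eq' _ _

lemma bval_pow_sub_bval_not_pow_eq_zero_iff (b : Bool) (k : ℕ) :
    bval b ^ k - bval (!b) ^ k = 0 ↔ k = 0 := by
  cases b <;> cases k <;> simp [bval]

lemma card_le_totalDegree_of_mem_support {R : Type*} [CommSemiring R] {p : MvPolynomial σ R}
    {m : σ →₀ ℕ} (hm : m ∈ p.support) {B : Finset σ} (hB : ∀ i ∈ B, m i ≠ 0) :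
    B.card ≤ p.totalDegree :=
  calc B.card ≤ ∑ i ∈ B, m i := by
        simpa using B.card_nsmul_le_sum m 1 fun i hi => Nat.one_le_iff_ne_zero.mpr (hB i hi)
    _ ≤ ∑ i ∈ m.support, m i :=
      Finset.sum_le_sum_of_subset fun i hi => Finsupp.mem_support_iff.mpr (hB i hi)
    _ ≤ p.totalDegree := le_totalDegree hm

variable [DecidableEq σ]

def flipOn (S : Finset σ) (x : σ → Bool) : σ → Bool := fun i => if i ∈ S then !x i else x i

@[simp] lemma flipOn_empty (x : σ → Bool) : flipOn ∅ x = x := by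
  funext i; simp [flipOn]

lemma flipOn_apply_of_notMem {S : Finset σ} (x : σ → Bool) {i : σ} (h : i ∉ S) :
    flipOn S x i = x i := if_neg h

lemma eq_flipOn_filter_ne [Fintype σ] (x y : σ → Bool) : y = flipOn {i | y i ≠ x i} x := by
  funext i; by_cases h : y i = x i <;> simp [flipOn, h, Bool.eq_not_iff]

theorem sum_powerset_neg_one_pow_mul_prod_flipOn [Fintype σ] {R : Type*} [CommRing R]
    (g : σ → Bool → R) (x : σ → Bool) (B : Finset σ) :
    ∑ S ∈ B.powerset, (-1) ^ S.card * ∏ i, g i (flipOn S x i) =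
      (∏ i ∈ Bᶜ, g i (x i)) * ∏ i ∈ B, (g i (x i) - g i (!x i)) := by
  have split : ∀ S ⊆ B, ∏ i, g i (flipOn S x i) =
      (∏ i ∈ S, g i (!x i)) * (∏ i ∈ B \ S, g i (x i)) * ∏ i ∈ Bᶜ, g i (x i) := by
    intro S hS
    rw [← Finset.prod_mul_prod_compl B]
    congr 1
    · simp only [flipOn, apply_ite]
      rw [Finset.prod_ite, Finset.filter_mem_eq_inter, Finset.inter_eq_right.mpr hS,
        Finset.filter_notMem_eq_sdiff]
    · exact Finset.prod_congr rfl fun i hi =>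
        congrArg (g i) (flipOn_apply_of_notMem x fun h => Finset.mem_compl.mp hi (hS h))
  simp_rw [sub_eq_neg_add, Finset.prod_add, Finset.prod_neg, Finset.mul_sum]
  refine Finset.sum_congr rfl fun S hS => ?_
  rw [split S (Finset.mem_powerset.mp hS)]
  ring

noncomputable def cubeDerivative (p : MvPolynomial σ ℝ) (x : σ → Bool) (B : Finset σ) : ℝ :=
  ∑ S ∈ B.powerset, (-1) ^ S.card * evalB (flipOn S x) p

theorem cubeDerivative_eq_sum [Fintype σ] (p : MvPolynomial σ ℝ) (x : σ → Bool)
    (B : Finset σ) :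
    cubeDerivative p x B =
      ∑ m ∈ p.support, coeff m p *
        ((∏ i ∈ Bᶜ, bval (x i) ^ m i) * ∏ i ∈ B, (bval (x i) ^ m i - bval (!x i) ^ m i)) := by
  simp_rw [cubeDerivative, evalB_eq_sum, Finset.mul_sum]
  rw [Finset.sum_comm]
  refine Finset.sum_congr rfl fun m _ => ?_
  rw [← sum_powerset_neg_one_pow_mul_prod_flipOn (fun i b => bval b ^ m i), Finset.mul_sum]
  exact Finset.sum_congr rfl fun S _ => by ring

theorem cubeDerivative_eq_zero_of_totalDegree_lt [Fintype σ] {p : MvPolynomial σ ℝ}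
    {B : Finset σ} (hB : p.totalDegree < B.card) (x : σ → Bool) : cubeDerivative p x B = 0 := by
  rw [cubeDerivative_eq_sum]
  refine Finset.sum_eq_zero fun m hm => ?_
  obtain ⟨i, hi, hmi⟩ : ∃ i ∈ B, m i = 0 := by
    by_contra! h
    exact hB.not_ge (card_le_totalDegree_of_mem_support hm h)
  rw [Finset.prod_eq_zero hi ((bval_pow_sub_bval_not_pow_eq_zero_iff _ _).mpr hmi), mul_zero,
    mul_zero]

theorem card_le_totalDegree_of_minimal [Fintype σ] {p : MvPolynomial σ ℝ} {x : σ → Bool}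
    {B : Finset σ} (hB : Minimal (fun S => evalB (flipOn S x) p ≠ 0) B) :
    B.card ≤ p.totalDegree := by
  by_contra! h
  have hsum := cubeDerivative_eq_zero_of_totalDegree_lt h x
  rw [cubeDerivative, Finset.sum_eq_single_of_mem B (Finset.mem_powerset_self B) fun S hS hSB => by
    rw [not_not.mp (hB.not_prop_of_lt (lt_of_le_of_ne (Finset.mem_powerset.mp hS) hSB)),
      mul_zero]] at hsum
  exact mul_ne_zero (pow_ne_zero _ (by norm_num)) hB.prop hsum

end BooleanCube

section Maxonomial

variable {n : ℕ}

lemma sum_single_one_apply (B : Finset (Fin n)) (j : Fin n) :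
    (∑ i ∈ B, Finsupp.single i 1) j = if j ∈ B then 1 else 0 := by
  simp [Finsupp.finsetSum_apply, Finsupp.single_apply]

lemma IsMaxonomial.eq_of_mem_support {p : MvPolynomial (Fin n) ℝ} {B : Finset (Fin n)}
    (hB : IsMaxonomial p B) {m : Fin n →₀ ℕ} (hm : m ∈ p.support) (hmB : ∀ i ∈ B, m i ≠ 0) :
    m = ∑ i ∈ B, Finsupp.single i 1 := by
  set mB : Fin n →₀ ℕ := ∑ i ∈ B, Finsupp.single i 1
  have hle : mB ≤ m := fun j => by
    rw [sum_single_one_apply]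
    split_ifs with hj
    · exact Nat.one_le_iff_ne_zero.mpr (hmB j hj)
    · exact Nat.zero_le _
  have hdeg : m.degree ≤ mB.degree := by
    rw [show mB.degree = B.card by simp [mB], hB.1]
    exact le_totalDegree hm
  rw [← add_tsub_cancel_of_le hle, map_add] at hdeg
  have : m - mB = 0 := (Finsupp.degree_eq_zero_iff _).mp (by omega)
  rw [← add_tsub_cancel_of_le hle, this, add_zero]

theorem IsMaxonomial.cubeDerivative_ne_zero {p : MvPolynomial (Fin n) ℝ}
    {B : Finset (Fin n)} (hB : IsMaxonomial p B) (x : Fin n → Bool) :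
    cubeDerivative p x B ≠ 0 := by
  rw [cubeDerivative_eq_sum,
    Finset.sum_eq_single_of_mem _ (mem_support_iff.mpr hB.2) fun m hm hne => ?_]
  · refine mul_ne_zero hB.2 (mul_ne_zero (Finset.prod_ne_zero_iff.mpr fun i hi => ?_)
      (Finset.prod_ne_zero_iff.mpr fun i hi => ?_))
    · simp [sum_single_one_apply, Finset.mem_compl.mp hi]
    · exact (bval_pow_sub_bval_not_pow_eq_zero_iff _ _).not.mpr
        (by simp [sum_single_one_apply, hi])
  · obtain ⟨i, hi, hmi⟩ : ∃ i ∈ B, m i = 0 := by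
      by_contra! h
      exact hne (hB.eq_of_mem_support hm h)
    rw [Finset.prod_eq_zero hi ((bval_pow_sub_bval_not_pow_eq_zero_iff _ _).mpr hmi), mul_zero,
      mul_zero]

theorem isHittingSet_of_forall_evalB_eq_zero {p : MvPolynomial (Fin n) ℝ} {H : Finset (Fin n)}
    (x : Fin n → Bool) (h : ∀ y, (∀ i ∈ H, y i = x i) → evalB y p = 0) : IsHittingSet p H := by
  intro M hM
  by_contra hHM
  refine hM.cubeDerivative_ne_zero x (Finset.sum_eq_zero fun S hS => ?_)
  rw [h _ fun i hi => flipOn_apply_of_notMem x fun hiS =>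
    hHM ⟨i, Finset.mem_inter.mpr ⟨hi, Finset.mem_powerset.mp hS hiS⟩⟩, mul_zero]

end Maxonomial

section BlockFlip

open scoped Polynomial

variable {σ : Type*} [DecidableEq σ]

lemma flipOn_biUnion_apply {F A : Finset (Finset σ)}
    (hF : (F : Set (Finset σ)).PairwiseDisjoint id) (hA : A ⊆ F) {B : Finset σ} (hB : B ∈ F)
    (x : σ → Bool) {i : σ} (hi : i ∈ B) :
    flipOn (A.biUnion id) x i = if B ∈ A then !x i else x i := by
  have : i ∈ A.biUnion id ↔ B ∈ A := by
    refine ⟨fun h => ?_, fun h => Finset.mem_biUnion.mpr ⟨B, h, hi⟩⟩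
    obtain ⟨B', hB', hiB'⟩ := Finset.mem_biUnion.mp h
    rwa [hF.elim_finset hB (hA hB') i hi hiB']
  simp only [flipOn, this]

theorem sum_powerset_mul_prod_flipOn_biUnion [Fintype σ] {R : Type*} [CommRing R]
    (g : σ → Bool → R) (a b : R) (x : σ → Bool) {F : Finset (Finset σ)}
    (hF : (F : Set (Finset σ)).PairwiseDisjoint id) :
    ∑ A ∈ F.powerset,
        (∏ i, g i (flipOn (A.biUnion id) x i)) * (a ^ A.card * b ^ (F.card - A.card)) =
      (∏ i ∈ (F.biUnion id)ᶜ, g i (x i)) *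
        ∏ B ∈ F, (a * ∏ i ∈ B, g i (!x i) + b * ∏ i ∈ B, g i (x i)) := by
  have split : ∀ A ⊆ F, ∏ i, g i (flipOn (A.biUnion id) x i) =
      (∏ i ∈ (F.biUnion id)ᶜ, g i (x i)) *
        ((∏ B ∈ A, ∏ i ∈ B, g i (!x i)) * ∏ B ∈ F \ A, ∏ i ∈ B, g i (x i)) := by
    intro A hA
    rw [← Finset.prod_mul_prod_compl (F.biUnion id), mul_comm]
    congr 1
    · exact Finset.prod_congr rfl fun i hi => congrArg (g i) (flipOn_apply_of_notMem x fun h =>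
        Finset.mem_compl.mp hi (Finset.biUnion_subset_biUnion_of_subset_left id hA h))
    · rw [Finset.prod_biUnion hF, ← Finset.prod_sdiff hA, mul_comm]
      congr 1 <;> refine Finset.prod_congr rfl fun B hB => Finset.prod_congr rfl fun i hi => ?_
      · simp [flipOn_biUnion_apply hF hA (hA hB) x hi, hB]
      · rw [Finset.mem_sdiff] at hB
        simp [flipOn_biUnion_apply hF hA hB.1 x hi, hB.2]
  rw [Finset.prod_add, Finset.mul_sum]
  refine Finset.sum_congr rfl fun A hA => ?_
  have hA := Finset.mem_powerset.mp hA
  rw [split A hA, Finset.prod_mul_distrib, Finset.prod_mul_distrib, Finset.prod_const,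
    Finset.prod_const, Finset.card_sdiff_of_subset hA]
  ring

/-- `(blockFlipPoly r x F).eval t` is the expected value of `r` at `x` after flipping each block
of `F` independently with probability `t`. -/
noncomputable def blockFlipPoly (r : MvPolynomial σ ℝ) (x : σ → Bool)
    (F : Finset (Finset σ)) : ℝ[X] :=
  ∑ A ∈ F.powerset,
    Polynomial.C (evalB (flipOn (A.biUnion id) x) r) *
      (Polynomial.X ^ A.card * (1 - Polynomial.X) ^ (F.card - A.card))

variable (r : MvPolynomial σ ℝ) (x : σ → Bool) (F : Finset (Finset σ))

lemma eval_blockFlipPoly (t : ℝ) :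
    (blockFlipPoly r x F).eval t = ∑ A ∈ F.powerset,
      evalB (flipOn (A.biUnion id) x) r * (t ^ A.card * (1 - t) ^ (F.card - A.card)) := by
  simp [blockFlipPoly, Polynomial.eval_finsetSum]

lemma abs_eval_blockFlipPoly_le {M : ℝ} (hM : ∀ y, |evalB y r| ≤ M) {t : ℝ}
    (ht : t ∈ Set.Icc (0 : ℝ) 1) : |(blockFlipPoly r x F).eval t| ≤ M := by
  have hw : ∀ A ∈ F.powerset, 0 ≤ t ^ A.card * (1 - t) ^ (F.card - A.card) := fun A _ =>
    mul_nonneg (pow_nonneg ht.1 _) (pow_nonneg (sub_nonneg.mpr ht.2) _)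
  calc |(blockFlipPoly r x F).eval t|
      ≤ ∑ A ∈ F.powerset, |evalB (flipOn (A.biUnion id) x) r| *
          (t ^ A.card * (1 - t) ^ (F.card - A.card)) := by
        rw [eval_blockFlipPoly]
        refine (Finset.abs_sum_le_sum_abs _ _).trans_eq (Finset.sum_congr rfl fun A hA => ?_)
        rw [abs_mul, abs_of_nonneg (hw A hA)]
    _ ≤ ∑ A ∈ F.powerset, M * (t ^ A.card * (1 - t) ^ (F.card - A.card)) :=
        Finset.sum_le_sum fun A hA => mul_le_mul_of_nonneg_right (hM _) (hw A hA)
    _ = M := by rw [← Finset.mul_sum, Finset.sum_pow_mul_eq_add_pow, add_sub_cancel, one_pow,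
        mul_one]

lemma coeff_one_blockFlipPoly :
    (blockFlipPoly r x F).coeff 1 =
      ∑ B ∈ F, evalB (flipOn B x) r - F.card * evalB x r := by
  have term : ∀ A ∈ F.powerset, evalB (flipOn (A.biUnion id) x) r *
      (if A.card = 0 then -((F.card - A.card : ℕ) : ℝ) else if A.card = 1 then 1 else 0) =
      (if A = ∅ then -(F.card * evalB x r) else 0) +
        if A.card = 1 then evalB (flipOn (A.biUnion id) x) r else 0 := fun A _ => by
    rcases A.eq_empty_or_nonempty with rfl | hA
    · simp [mul_comm]
    · simp [hA.ne_empty, Finset.card_eq_zero.not.mpr hA.ne_empty]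
  simp_rw [blockFlipPoly, Polynomial.finsetSum_coeff, Polynomial.coeff_C_mul,
    Polynomial.coeff_one_X_pow_mul_one_sub_X_pow]
  rw [Finset.sum_congr rfl term, Finset.sum_add_distrib, Finset.sum_ite_eq',
    if_pos (Finset.empty_mem_powerset F), ← Finset.sum_filter, ← Finset.powersetCard_eq_filter,
    Finset.powersetCard_one, Finset.sum_map]
  simp [sub_eq_neg_add]

theorem natDegree_blockFlipPoly_le [Fintype σ]
    (hF : (F : Set (Finset σ)).PairwiseDisjoint id) :
    (blockFlipPoly r x F).natDegree ≤ r.totalDegree := by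
  set factor : (σ →₀ ℕ) → Finset σ → ℝ[X] := fun m B =>
    Polynomial.X * ∏ i ∈ B, Polynomial.C (bval (!x i) ^ m i) +
      (1 - Polynomial.X) * ∏ i ∈ B, Polynomial.C (bval (x i) ^ m i)
  have expand : blockFlipPoly r x F = ∑ m ∈ r.support, Polynomial.C (coeff m r) *
      ((∏ i ∈ (F.biUnion id)ᶜ, Polynomial.C (bval (x i) ^ m i)) * ∏ B ∈ F, factor m B) := by
    simp only [blockFlipPoly, evalB_eq_sum, map_sum, map_mul, map_prod, Finset.sum_mul]
    rw [Finset.sum_comm]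
    refine Finset.sum_congr rfl fun m _ => ?_
    rw [← sum_powerset_mul_prod_flipOn_biUnion (fun i b => Polynomial.C (bval b ^ m i)) _ _ x hF,
      Finset.mul_sum]
    exact Finset.sum_congr rfl fun A _ => by ring
  have factor_le : ∀ m B, (factor m B).natDegree ≤ ∑ i ∈ B, m i := fun m B => by
    by_cases h : ∑ i ∈ B, m i = 0
    · have hone : ∀ y : σ → Bool, ∏ i ∈ B, Polynomial.C (bval (y i) ^ m i) = 1 := fun y =>
        Finset.prod_eq_one fun i hi => by rw [Finset.sum_eq_zero_iff.mp h i hi, pow_zero, map_one]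
      have : factor m B = 1 := by
        simp only [factor]
        rw [hone x, hone fun i => !x i]
        ring
      simp [this]
    · refine le_trans ?_ (Nat.one_le_iff_ne_zero.mpr h)
      simp only [factor, ← map_prod]
      compute_degree
  rw [expand]
  refine Polynomial.natDegree_sum_le_of_forall_le _ _ fun m hm => ?_
  calc _ ≤ ∑ B ∈ F, (factor m B).natDegree := by
        refine (Polynomial.natDegree_C_mul_le _ _).trans (Polynomial.natDegree_mul_le.trans ?_)
        rw [← map_prod, Polynomial.natDegree_C, zero_add]
        exact Polynomial.natDegree_prod_le _ _
    _ ≤ ∑ B ∈ F, ∑ i ∈ B, m i := Finset.sum_le_sum fun B _ => factor_le m B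
    _ = ∑ i ∈ F.biUnion id, m i := (Finset.sum_biUnion hF).symm
    _ ≤ ∑ i, m i := Finset.sum_le_sum_of_subset (Finset.subset_univ _)
    _ ≤ r.totalDegree := by rw [← Finsupp.degree_eq_sum]; exact le_totalDegree hm

end BlockFlip

theorem card_lt_two_mul_totalDegree_sq {σ : Type*} [Fintype σ] [DecidableEq σ]
    {r : MvPolynomial σ ℝ} {x : σ → Bool} {F : Finset (Finset σ)}
    (hF : (F : Set (Finset σ)).PairwiseDisjoint id) (hFne : F.Nonempty)
    (hx : ∀ y, |evalB y r| ≤ evalB x r) (hneg : ∀ B ∈ F, evalB (flipOn B x) r < 0) :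
    F.card < 2 * r.totalDegree ^ 2 := by
  obtain ⟨B₀, hB₀⟩ := hFne
  have hM : 0 < evalB x r := (abs_pos.mpr (hneg B₀ hB₀).ne).trans_le (hx _)
  have hcoeff : F.card * evalB x r < |(blockFlipPoly r x F).coeff 1| := by
    rw [coeff_one_blockFlipPoly]
    exact lt_abs.mpr (Or.inr (by linarith [Finset.sum_neg hneg ⟨B₀, hB₀⟩]))
  have hmarkov := Polynomial.abs_coeff_one_le_of_abs_eval_le
    (natDegree_blockFlipPoly_le r x F hF) hM fun t ht => abs_eval_blockFlipPoly_le r x F hx ht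
  exact_mod_cast lt_of_mul_lt_mul_right (hcoeff.trans_le hmarkov) hM.le

section BlockPacking

variable {σ : Type*} [DecidableEq σ]

def IsBlockPacking (g : (σ → Bool) → Bool) (x : σ → Bool) (F : Finset (Finset σ)) : Prop :=
  (∀ B ∈ F, Minimal (fun S => g (flipOn S x) = true) B) ∧
    (F : Set (Finset σ)).PairwiseDisjoint id

theorem apply_eq_false_of_maximal_isBlockPacking [Fintype σ] {g : (σ → Bool) → Bool}
    {x : σ → Bool} {F : Finset (Finset σ)} (hF : Maximal (IsBlockPacking g x) F) (hx : g x = false)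
    {y : σ → Bool} (hy : ∀ i ∈ F.biUnion id, y i = x i) : g y = false := by
  by_contra hgy
  obtain ⟨S, hSD, hS⟩ := exists_minimal_le_of_wellFoundedLT (fun S => g (flipOn S x) = true)
    ({i | y i ≠ x i} : Finset σ) (by rwa [← eq_flipOn_filter_ne, ← Bool.not_eq_false])
  have hSU : Disjoint S (F.biUnion id) := Finset.disjoint_left.mpr fun i hiS hiU =>
    (Finset.mem_filter.mp (hSD hiS)).2 (hy i hiU)
  have hSF : S ∈ F := by
    refine hF.2 ⟨fun B hB => ?_, ?_⟩ (Finset.subset_insert S F) (Finset.mem_insert_self S F)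
    · rcases Finset.mem_insert.mp hB with rfl | hB
      exacts [hS, hF.1.1 B hB]
    · rw [Finset.coe_insert]
      exact hF.1.2.insert fun B hB _ => hSU.mono_right (Finset.subset_biUnion_of_mem id hB)
  have hS0 : S = ∅ := hSU.eq_bot_of_le (Finset.subset_biUnion_of_mem id hSF)
  simpa [hS0, hx] using hS.prop

end BlockPacking

section SignRepresentation

variable {σ : Type*} [Fintype σ]

noncomputable def cubeIndicator (a : σ → Bool) : MvPolynomial σ ℝ :=
  ∏ i, if a i then X i else 1 - X i

lemma evalB_cubeIndicator (x a : σ → Bool) :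
    evalB x (cubeIndicator a) = if x = a then 1 else 0 := by
  have factor : ∀ i, evalB x (if a i then X i else 1 - X i) = if x i = a i then 1 else 0 :=
    fun i => by cases a i <;> cases hx : x i <;> simp [evalB, hx]
  simp only [cubeIndicator, evalB, map_prod] at factor ⊢
  simp only [factor, Finset.prod_ite_zero, Finset.prod_const_one, _root_.funext_iff,
    Finset.mem_univ, true_implies]

lemma multilinear_cubeIndicator [DecidableEq σ] (a : σ → Bool) :
    Multilinear (cubeIndicator a) := fun j => by
  have factor : ∀ i, degreeOf j (if a i then X i else 1 - X i : MvPolynomial σ ℝ) ≤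
      if j = i then 1 else 0 := fun i => by
    by_cases ha : a i
    · simp only [ha, if_true, degreeOf_X, le_refl]
    · simp only [ha]
      exact (degreeOf_sub_le j 1 (X i)).trans (by simp [degreeOf_one, degreeOf_X (R := ℝ)])
  calc degreeOf j (cubeIndicator a)
      ≤ ∑ i, if j = i then 1 else 0 :=
        (degreeOf_prod_le j _ _).trans (Finset.sum_le_sum fun i _ => factor i)
    _ = 1 := by simp

lemma exists_multilinear_signRep [DecidableEq σ] (f : (σ → Bool) → Bool) :
    ∃ r : MvPolynomial σ ℝ, Multilinear r ∧ (∀ x, evalB x r ≠ 0) ∧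
      (∀ x, evalB x r < 0 ↔ f x = true) := by
  set r : MvPolynomial σ ℝ := ∑ a, C (if f a then -1 else 1) * cubeIndicator a
  have hr : ∀ x, evalB x r = if f x then -1 else 1 := fun x => by
    calc evalB x r = ∑ a, (if f a then -1 else 1) * evalB x (cubeIndicator a) := by
          simp [r, evalB]
      _ = _ := by simp [evalB_cubeIndicator]
  refine ⟨r, fun j => ?_, fun x => by rw [hr]; split_ifs <;> norm_num,
    fun x => by rw [hr]; split_ifs with h <;> simp [h]⟩
  exact (degreeOf_sum_le j _ _).trans (Finset.sup_le fun a _ =>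
    (degreeOf_C_mul_le _ _ _).trans (multilinear_cubeIndicator a j))

end SignRepresentation

theorem exists_signRep_totalDegree_eq_sdeg {n : ℕ} (f : (Fin n → Bool) → Bool) :
    ∃ r : MvPolynomial (Fin n) ℝ, (∀ x, evalB x r ≠ 0) ∧ (∀ x, evalB x r < 0 ↔ f x = true) ∧
      r.totalDegree = sdeg f := by
  obtain ⟨r₀, hml, hr0, hr⟩ := exists_multilinear_signRep f
  obtain ⟨r, -, hr⟩ := (Nat.sInf_mem ⟨_, r₀, hml, hr0, hr, rfl⟩ : sdeg f ∈ _)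
  exact ⟨r, hr⟩

theorem exists_isHittingSet_card_le {n : ℕ} {g : (Fin n → Bool) → Bool}
    {p r : MvPolynomial (Fin n) ℝ} (hp : ∀ y, evalB y p ≠ 0 ↔ g y = true)
    (hr : ∀ y, evalB y r < 0 ↔ g y = true) {x : Fin n → Bool}
    (hx : ∀ y, |evalB y r| ≤ evalB x r) :
    ∃ H : Finset (Fin n), IsHittingSet p H ∧ H.card ≤ 2 * p.totalDegree * r.totalDegree ^ 2 := by
  have hgx : g x = false := by
    rw [← Bool.not_eq_true, ← hr]
    exact not_lt.mpr ((abs_nonneg _).trans (hx x))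
  obtain ⟨F, hF⟩ :=
    exists_maximal_of_wellFoundedGT (IsBlockPacking g x) ⟨∅, by simp [IsBlockPacking]⟩
  have hblock : ∀ B ∈ F, B.card ≤ p.totalDegree := fun B hB => by
    refine card_le_totalDegree_of_minimal (x := x) ?_
    simpa only [hp] using hF.1.1 B hB
  have hcount : F.card ≤ 2 * r.totalDegree ^ 2 := by
    rcases F.eq_empty_or_nonempty with rfl | hFne
    · simp
    · exact (card_lt_two_mul_totalDegree_sq hF.1.2 hFne hx fun B hB =>
        (hr _).mpr (hF.1.1 B hB).prop).le
  refine ⟨F.biUnion id, isHittingSet_of_forall_evalB_eq_zero x fun y hy => ?_, ?_⟩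
  · by_contra h
    simpa [apply_eq_false_of_maximal_isBlockPacking hF hgx hy] using (hp y).mp h
  · calc (F.biUnion id).card ≤ ∑ B ∈ F, B.card := Finset.card_biUnion_le
      _ ≤ F.card * p.totalDegree := by simpa using Finset.sum_le_card_nsmul F _ _ hblock
      _ ≤ 2 * r.totalDegree ^ 2 * p.totalDegree := Nat.mul_le_mul_right _ hcount
      _ = 2 * p.totalDegree * r.totalDegree ^ 2 := by ring

theorem stmt_8_general (n : ℕ) (f : (Fin n → Bool) → Bool)
    (p q : MvPolynomial (Fin n) ℝ)
    (hp : ∀ x, evalB x p ≠ 0 ↔ f x = true)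
    (hq : ∀ x, evalB x q ≠ 0 ↔ (!(f x)) = true) :
    (∃ H : Finset (Fin n), IsHittingSet p H ∧ H.card ≤ 2 * p.totalDegree * sdeg f ^ 2) ∨
    (∃ K : Finset (Fin n), IsHittingSet q K ∧ K.card ≤ 2 * q.totalDegree * sdeg f ^ 2) := by
  obtain ⟨r, hr0, hr, hdeg⟩ := exists_signRep_totalDegree_eq_sdeg f
  obtain ⟨x, hx⟩ := Finite.exists_max fun y => |evalB y r|
  rcases le_or_gt 0 (evalB x r) with hpos | hneg
  · left
    rw [← hdeg]
    exact exists_isHittingSet_card_le hp hr fun y => (hx y).trans (abs_of_nonneg hpos).le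
  · right
    have hevalB_neg : ∀ y, evalB y (-r) = -evalB y r := fun y => map_neg _ r
    have hr' : ∀ y, evalB y (-r) < 0 ↔ (!(f y)) = true := fun y => by
      rw [hevalB_neg, neg_lt_zero, Bool.not_eq_true', ← Bool.not_eq_true, ← hr,
        not_lt, lt_iff_le_and_ne, and_iff_left (hr0 y).symm]
    rw [← hdeg, ← totalDegree_neg r]
    exact exists_isHittingSet_card_le hq hr' fun y => by
      rw [hevalB_neg, hevalB_neg, abs_neg]
      exact (hx y).trans (abs_of_neg hneg).le

/-- Let f be a nonconstant Boolean function, p a nondeterministic representation of f, and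
q a nondeterministic representation of ¬f. Then either p has a hitting set of size at most
2·deg(p)·sdeg(f)^2, or q has a hitting set of size at most 2·deg(q)·sdeg(f)^2. -/
theorem stmt_8 (n : ℕ) (f : (Fin n → Bool) → Bool)
    (hf : ∃ x y : Fin n → Bool, f x ≠ f y)
    (p q : MvPolynomial (Fin n) ℝ) (hpml : Multilinear p) (hqml : Multilinear q)
    (hp : ∀ x, evalB x p ≠ 0 ↔ f x = true)
    (hq : ∀ x, evalB x q ≠ 0 ↔ (!(f x)) = true) :
    (∃ H : Finset (Fin n), IsHittingSet p H ∧ H.card ≤ 2 * p.totalDegree * sdeg f ^ 2) ∨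
    (∃ K : Finset (Fin n), IsHittingSet q K ∧ K.card ≤ 2 * q.totalDegree * sdeg f ^ 2) :=
  stmt_8_general n f p q hp hq
end

section
/- Let n ≥ 1 and let p be a real polynomial in 2n variables X_1,…,X_n,Y_1,…,Y_n such that p(x,y) = 0 for all (x,y) ∈ {0,1}^n × {0,1}^n with x = 0^n, and p(x,y) = 1 for all (x,y) ∈ {0,1}^n × {0,1}^n with |x| ≥ 1 and |x| + |y| = n+1. Then deg(p) ≥ n. -/
/-!
Symmetrize `p` separately over the two blocks of variables (Minsky–Papert): averaging over the
points with `|x| = s`, `|y| = t` gives a bivariate polynomial `P(s, t)` of total degree at most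
`deg p`. The hypotheses say `P(0, t) = 0` for `0 ≤ t ≤ n` and `P(s, n + 1 - s) = 1` for
`1 ≤ s ≤ n`. If `deg p < n`, the first forces `t ↦ P(0, t)` to vanish identically, so
`P(0, n + 1) = 0`, while the second forces `s ↦ P(s, n + 1 - s)` to be constantly `1`, so
`P(0, n + 1) = 1`.
-/

open MvPolynomial

/-- The Hamming weight of a Boolean string. -/
def wt {n : ℕ} (x : Fin n → Bool) : ℕ := (Finset.univ.filter fun i => x i = true).card

open Finset
open scoped Polynomial

lemma card_filter_wt_eq_and (n s : ℕ) (P : Finset (Fin n) → Prop) [DecidablePred P] :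
    #{x : Fin n → Bool | wt x = s ∧ P ({i | x i = true} : Finset (Fin n))}
      = #{S ∈ powersetCard s univ | P S} :=
  card_bij' (fun x _ => ({i | x i = true} : Finset (Fin n))) (fun S _ i => decide (i ∈ S))
    (fun x hx => by
      rw [mem_filter] at hx
      simpa [wt] using hx.2)
    (fun S hS => by
      rw [mem_filter] at hS ⊢
      simpa [wt] using hS)
    (fun x _ => by ext i; simp) (fun S _ => by ext i; simp)

lemma card_filter_wt_eq_and_subset_mul_descFactorial (n s : ℕ) (A : Finset (Fin n)) :
    #{x : Fin n → Bool | wt x = s ∧ ∀ i ∈ A, x i = true} * n.descFactorial #A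
      = n.choose s * s.descFactorial #A := by
  have hcard : #{x : Fin n → Bool | wt x = s ∧ ∀ i ∈ A, x i = true}
      = #{S ∈ powersetCard s univ | A ⊆ S} := by
    rw [← card_filter_wt_eq_and]
    congr 1
    ext x
    simp [subset_iff]
  rcases lt_or_ge s #A with hsA | hAs
  · rw [Nat.descFactorial_eq_zero_iff_lt.mpr hsA, hcard, card_eq_zero.mpr, zero_mul, mul_zero]
    exact filter_eq_empty_iff.mpr fun S hS hAS =>
      (card_le_card hAS).not_gt ((mem_powersetCard.mp hS).2 ▸ hsA)
  · rw [hcard, card_filter_powersetCard_subset A univ s (subset_univ A) hAs, card_univ,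
      Fintype.card_fin, Nat.descFactorial_eq_factorial_mul_choose,
      Nat.descFactorial_eq_factorial_mul_choose, mul_left_comm (n.choose s), Nat.choose_mul hAs]
    ring

/-- At `s : ℕ` this is `s.descFactorial a / n.descFactorial a`, the fraction of the weight-`s`
strings of length `n` that are `true` on a fixed set of `a` coordinates. -/
noncomputable def fallingWeight (n a : ℕ) : ℝ[X] :=
  Polynomial.C ((n.descFactorial a : ℝ)⁻¹) * descPochhammer ℝ a

lemma natDegree_fallingWeight_le (n a : ℕ) : (fallingWeight n a).natDegree ≤ a :=
  (Polynomial.natDegree_C_mul_le _ _).trans (descPochhammer_natDegree ℝ a).le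

lemma sum_wt_eq_ite_forall_mem (n s : ℕ) (A : Finset (Fin n)) :
    ∑ x : Fin n → Bool with wt x = s, (if ∀ i ∈ A, x i = true then 1 else 0 : ℝ)
      = n.choose s * (fallingWeight n #A).eval (s : ℝ) := by
  have hA : (n.descFactorial #A : ℝ) ≠ 0 := by
    exact_mod_cast (Nat.descFactorial_pos.mpr (by simpa using card_le_univ A)).ne'
  rw [sum_boole, filter_filter, fallingWeight, Polynomial.eval_mul, Polynomial.eval_C,
    descPochhammer_eval_eq_descFactorial, mul_left_comm, eq_inv_mul_iff_mul_eq₀ hA, mul_comm]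
  exact_mod_cast card_filter_wt_eq_and_subset_mul_descFactorial n s A

lemma evalB_eq_sum_s15 {σ : Type*} (z : σ → Bool) (p : MvPolynomial σ ℝ) :
    evalB z p = ∑ u ∈ p.support, coeff u p * if ∀ i ∈ u.support, z i = true then 1 else 0 := by
  rw [evalB, eval_eq]
  refine sum_congr rfl fun u _ => congrArg _ ?_
  rw [← prod_boole]
  refine prod_congr rfl fun i hi => ?_
  split_ifs <;> simp [Finsupp.mem_support_iff.mp hi]

lemma forall_mem_sum_elim_iff {α β : Type*} (s : Finset (α ⊕ β)) (x : α → Bool) (y : β → Bool) :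
    (∀ i ∈ s, Sum.elim x y i = true) ↔
      (∀ i ∈ s.toLeft, x i = true) ∧ ∀ j ∈ s.toRight, y j = true := by
  simp [Sum.forall]

lemma natDegree_fallingWeight_comp_le (n a : ℕ) {σ : ℝ[X]} (hσ : σ.natDegree ≤ 1) :
    ((fallingWeight n a).comp σ).natDegree ≤ a :=
  Polynomial.natDegree_comp_le.trans <|
    (Nat.mul_le_mul (natDegree_fallingWeight_le n a) hσ).trans_eq (mul_one a)

lemma Finsupp.card_support_le_sum {ι : Type*} (u : ι →₀ ℕ) : #u.support ≤ u.sum fun _ e => e := by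
  simpa [Finsupp.sum] using u.support.card_nsmul_le_sum u 1 fun i hi =>
    Nat.one_le_iff_ne_zero.mpr (Finsupp.mem_support_iff.mp hi)

lemma Polynomial.eq_C_of_natDegree_lt_of_eval_natCast_add {R : Type*} [CommRing R] [IsDomain R]
    [CharZero R] (q : R[X]) {a m : ℕ} (c : R) (hq : q.natDegree < m)
    (h : ∀ k < m, q.eval ((a + k : ℕ) : R) = c) : q = C c :=
  eq_of_natDegree_lt_card_of_eval_eq q (C c) (f := fun k : Fin m => ((a + k : ℕ) : R))
    (fun i j hij => Fin.ext (by simpa using hij)) (fun k => by simpa using h k k.2)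
    (by simpa using hq)

section

variable {n : ℕ}

/-- The two-block Minsky–Papert symmetrization of `p`: by `sum_wt_sum_wt_evalB`, at `s, t ≤ n`
it is the average of `p` over the points `(x, y)` with `|x| = s` and `|y| = t`. -/
noncomputable def symmetrize (p : MvPolynomial (Fin n ⊕ Fin n) ℝ) (s t : ℝ) : ℝ :=
  ∑ u ∈ p.support, coeff u p * (fallingWeight n #u.support.toLeft).eval s
    * (fallingWeight n #u.support.toRight).eval t

lemma sum_wt_sum_wt_evalB (p : MvPolynomial (Fin n ⊕ Fin n) ℝ) (s t : ℕ) :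
    ∑ x : Fin n → Bool with wt x = s, ∑ y : Fin n → Bool with wt y = t,
        evalB (Sum.elim x y) p
      = n.choose s * n.choose t * symmetrize p s t := by
  have hterm : ∀ u, (n.choose s : ℝ) * n.choose t * (coeff u p
      * (fallingWeight n #u.support.toLeft).eval (s : ℝ)
      * (fallingWeight n #u.support.toRight).eval (t : ℝ))
      = ∑ x : Fin n → Bool with wt x = s, ∑ y : Fin n → Bool with wt y = t,
          coeff u p * ((if ∀ i ∈ u.support.toLeft, x i = true then 1 else 0)
            * if ∀ j ∈ u.support.toRight, y j = true then 1 else 0) := by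
    intro u
    calc _ = coeff u p * ((n.choose s * (fallingWeight n #u.support.toLeft).eval (s : ℝ))
          * (n.choose t * (fallingWeight n #u.support.toRight).eval (t : ℝ))) := by ring
      _ = _ := by
        rw [← sum_wt_eq_ite_forall_mem, ← sum_wt_eq_ite_forall_mem, sum_mul_sum]
        simp only [mul_sum]
  rw [symmetrize, mul_sum, sum_congr rfl fun u _ => hterm u, sum_comm (s := p.support)]
  refine sum_congr rfl fun x _ => ?_
  rw [sum_comm]
  refine sum_congr rfl fun y _ => ?_
  rw [evalB_eq_sum_s15]
  refine sum_congr rfl fun u _ => ?_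
  simp only [ite_zero_mul_ite_zero, one_mul, forall_mem_sum_elim_iff]

lemma exists_natDegree_le_eval_eq_symmetrize (p : MvPolynomial (Fin n ⊕ Fin n) ℝ) {σ τ : ℝ[X]}
    (hσ : σ.natDegree ≤ 1) (hτ : τ.natDegree ≤ 1) :
    ∃ q : ℝ[X], q.natDegree ≤ p.totalDegree ∧
      ∀ r, q.eval r = symmetrize p (σ.eval r) (τ.eval r) := by
  refine ⟨∑ u ∈ p.support, Polynomial.C (coeff u p) * (fallingWeight n #u.support.toLeft).comp σ
      * (fallingWeight n #u.support.toRight).comp τ, ?_,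
    fun r => by simp [symmetrize, Polynomial.eval_finsetSum]⟩
  refine Polynomial.natDegree_sum_le_of_forall_le _ _ fun u hu => ?_
  calc _ ≤ #u.support.toLeft + #u.support.toRight :=
        Polynomial.natDegree_mul_le.trans <| add_le_add
          ((Polynomial.natDegree_C_mul_le _ _).trans (natDegree_fallingWeight_comp_le n _ hσ))
          (natDegree_fallingWeight_comp_le n _ hτ)
    _ = #u.support := card_toLeft_add_card_toRight
    _ ≤ u.sum fun _ e => e := u.card_support_le_sum
    _ ≤ p.totalDegree := le_totalDegree hu

lemma symmetrize_eq_of_forall_wt_eq (p : MvPolynomial (Fin n ⊕ Fin n) ℝ) {s t : ℕ} (hs : s ≤ n)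
    (ht : t ≤ n) (c : ℝ) (h : ∀ x y, wt x = s → wt y = t → evalB (Sum.elim x y) p = c) :
    symmetrize p s t = c := by
  have hcard (k : ℕ) : (#{x : Fin n → Bool | wt x = k} : ℝ) = n.choose k := by
    simpa [fallingWeight] using sum_wt_eq_ite_forall_mem n k ∅
  have hslice := sum_wt_sum_wt_evalB p s t
  rw [sum_congr rfl fun x hx => sum_congr rfl fun y hy =>
    h x y (mem_filter.mp hx).2 (mem_filter.mp hy).2] at hslice
  simp only [sum_const, nsmul_eq_mul, hcard, ← mul_assoc] at hslice
  have hpos : (n.choose s * n.choose t : ℝ) ≠ 0 := by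
    have := Nat.choose_pos hs
    have := Nat.choose_pos ht
    positivity
  exact (mul_left_cancel₀ hpos hslice).symm

lemma wt_eq_zero_iff (x : Fin n → Bool) : wt x = 0 ↔ x = fun _ => false := by
  simp [wt, filter_eq_empty_iff, funext_iff]

lemma symmetrize_zero_add_one_eq_zero (p : MvPolynomial (Fin n ⊕ Fin n) ℝ)
    (hp : p.totalDegree ≤ n) (h : ∀ t ≤ n, symmetrize p 0 t = 0) :
    symmetrize p 0 (n + 1) = 0 := by
  obtain ⟨f, hf, hf_eval⟩ := exists_natDegree_le_eval_eq_symmetrize p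
    (σ := Polynomial.C 0) (τ := Polynomial.X) (by simp) (by simp)
  have hf0 : f = Polynomial.C 0 :=
    f.eq_C_of_natDegree_lt_of_eval_natCast_add (a := 0) (m := n + 1) 0 (by omega)
      fun t ht => by simpa [hf_eval] using h t (by omega)
  simpa [hf0] using (hf_eval (n + 1)).symm

lemma symmetrize_zero_add_one_eq_one (p : MvPolynomial (Fin n ⊕ Fin n) ℝ)
    (hp : p.totalDegree < n)
    (h : ∀ s t : ℕ, 1 ≤ s → 1 ≤ t → s + t = n + 1 → symmetrize p s t = 1) :
    symmetrize p 0 (n + 1) = 1 := by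
  obtain ⟨g, hg, hg_eval⟩ := exists_natDegree_le_eval_eq_symmetrize p
    (σ := Polynomial.X) (τ := Polynomial.C ((n : ℝ) + 1) - Polynomial.X) (by simp)
    (by compute_degree!)
  have hg1 : g = Polynomial.C 1 :=
    g.eq_C_of_natDegree_lt_of_eval_natCast_add (a := 1) (m := n) 1 (by omega) fun k hk => by
      have hcast : (n : ℝ) + 1 - ((1 + k : ℕ) : ℝ) = ((n - k : ℕ) : ℝ) := by
        push_cast [Nat.cast_sub hk.le]
        ring
      rw [hg_eval, Polynomial.eval_X, Polynomial.eval_sub, Polynomial.eval_C, Polynomial.eval_X,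
        hcast]
      exact h _ _ (by omega) (by omega) (by omega)
  simpa [hg1] using (hg_eval 0).symm

end

theorem stmt_15_general (n : ℕ) (p : MvPolynomial (Fin n ⊕ Fin n) ℝ)
    (h0 : ∀ x y : Fin n → Bool, x = (fun _ => false) →
      evalB (Sum.elim x y) p = 0)
    (h1 : ∀ x y : Fin n → Bool, 1 ≤ wt x → wt x + wt y = n + 1 →
      evalB (Sum.elim x y) p = 1) :
    n ≤ p.totalDegree := by
  by_contra! hdeg
  have hzero : ∀ t ≤ n, symmetrize p 0 t = 0 := fun t ht => by
    exact_mod_cast symmetrize_eq_of_forall_wt_eq p n.zero_le ht 0 fun x y hx _ =>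
      h0 x y ((wt_eq_zero_iff x).mp hx)
  have hone : ∀ s t : ℕ, 1 ≤ s → 1 ≤ t → s + t = n + 1 → symmetrize p s t = 1 :=
    fun s t hs ht hst => symmetrize_eq_of_forall_wt_eq p (by omega) (by omega) 1 fun x y hx hy =>
      h1 x y (by omega) (by omega)
  have h := symmetrize_zero_add_one_eq_zero p hdeg.le hzero
  rw [symmetrize_zero_add_one_eq_one p hdeg hone] at h
  exact one_ne_zero h

/-- If a real polynomial p in 2n variables (indexed by Fin n ⊕ Fin n) vanishes on all points
(x,y) with x = 0^n and equals 1 on all points with |x| ≥ 1 and |x|+|y| = n+1, then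
deg(p) ≥ n. -/
theorem stmt_15 (n : ℕ) (hn : 1 ≤ n) (p : MvPolynomial (Fin n ⊕ Fin n) ℝ)
    (h0 : ∀ x y : Fin n → Bool, x = (fun _ => false) →
      evalB (Sum.elim x y) p = 0)
    (h1 : ∀ x y : Fin n → Bool, 1 ≤ wt x → wt x + wt y = n + 1 →
      evalB (Sum.elim x y) p = 1) :
    n ≤ p.totalDegree :=
  stmt_15_general n p h0 h1
end

section
/- Let n be even and let f: {0,1}^n → {0,1} be defined by f(x) = 0 if and only if |x| = n/2. Then sdeg(f) ≤ 2, while bs_z(f) ≥ n at the point z = 1^{n/2}0^{n/2} (so max_{x∈{0,1}^n} bs_x(f) ≥ n). -/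
open MvPolynomial

/-- `flipSet x B` is `x` with all bits in `B` flipped. -/
def flipSet {n : ℕ} (x : Fin n → Bool) (B : Finset (Fin n)) : Fin n → Bool :=
  fun i => if i ∈ B then !(x i) else x i

/-- The block sensitivity of `f` at `x`: the maximum number of pairwise disjoint
sensitive blocks of `f` at `x`. -/
noncomputable def bs {n : ℕ} (f : (Fin n → Bool) → Bool) (x : Fin n → Bool) : ℕ :=
  sSup {k | ∃ Bs : Fin k → Finset (Fin n),
    (∀ i, f (flipSet x (Bs i)) ≠ f x) ∧ (∀ i j, i ≠ j → Disjoint (Bs i) (Bs j))}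

/-! On the cube, `1/2 - (|x| - c)²` is a quadratic polynomial in `|x| = ∑ xᵢ`; replacing each
`xᵢ²` by `xᵢ` makes it multilinear of degree 2, and it is negative exactly off the slice
`|x| = c`. At a point of weight `c` every single bit flip leaves the slice, so the `n`
singletons are pairwise disjoint sensitive blocks. -/

open Finset

section Cube

variable {σ : Type*}

theorem multilinear_C (a : ℝ) : Multilinear (C a : MvPolynomial σ ℝ) := fun i =>
  (degreeOf_C a i).trans_le zero_le_one

theorem multilinear_X [DecidableEq σ] (i : σ) : Multilinear (X i : MvPolynomial σ ℝ) := by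
  intro k; rw [degreeOf_X]; split_ifs <;> simp

theorem multilinear_X_mul_X [DecidableEq σ] {i j : σ} (hij : i ≠ j) :
    Multilinear (X i * X j : MvPolynomial σ ℝ) := fun k => by
  refine (degreeOf_mul_le _ _ _).trans ?_
  rw [degreeOf_X, degreeOf_X]
  split_ifs <;> simp_all

theorem Multilinear.add {p q : MvPolynomial σ ℝ} (hp : Multilinear p) (hq : Multilinear q) :
    Multilinear (p + q) := fun i => (degreeOf_add_le _ _ _).trans (max_le (hp i) (hq i))

theorem Multilinear.sub {p q : MvPolynomial σ ℝ} (hp : Multilinear p) (hq : Multilinear q) :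
    Multilinear (p - q) := fun i => (degreeOf_sub_le _ _ _).trans (max_le (hp i) (hq i))

theorem Multilinear.C_mul {p : MvPolynomial σ ℝ} (hp : Multilinear p) (a : ℝ) :
    Multilinear (C a * p) := fun i => (degreeOf_C_mul_le _ _ _).trans (hp i)

theorem multilinear_sum {ι : Type*} (s : Finset ι) {p : ι → MvPolynomial σ ℝ}
    (hp : ∀ i ∈ s, Multilinear (p i)) : Multilinear (∑ i ∈ s, p i) := fun k =>
  (degreeOf_sum_le _ _ _).trans (Finset.sup_le fun i hi => hp i hi k)

theorem evalB_eq_eval (x : σ → Bool) (p : MvPolynomial σ ℝ) :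
    evalB x p = eval (fun i => bval (x i)) p := rfl

end Cube

section SlicePolynomial

variable (σ : Type*) [Fintype σ] [DecidableEq σ]

noncomputable def weightPoly : MvPolynomial σ ℝ := ∑ i, X i

noncomputable def pairPoly : MvPolynomial σ ℝ := ∑ i, ∑ j ∈ univ.erase i, X i * X j

/-- On the cube, where `weightPoly` takes the value `s = |x|` and `pairPoly` the value
`s² - s`, this is `1/2 - (s - c)²`: negative exactly off the slice `|x| = c`. -/
noncomputable def sliceSignPoly (c : ℝ) : MvPolynomial σ ℝ :=
  C (1 / 2 - c ^ 2) + C (2 * c - 1) * weightPoly σ - pairPoly σ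

theorem multilinear_sliceSignPoly (c : ℝ) : Multilinear (sliceSignPoly σ c) :=
  ((multilinear_C _).add
    ((multilinear_sum _ fun i _ => multilinear_X i).C_mul _)).sub
    (multilinear_sum _ fun _ _ => multilinear_sum _ fun _ hj =>
      multilinear_X_mul_X (ne_of_mem_erase hj).symm)

theorem totalDegree_sliceSignPoly_le (c : ℝ) : (sliceSignPoly σ c).totalDegree ≤ 2 := by
  have hweight : (weightPoly σ).totalDegree ≤ 1 :=
    (totalDegree_finsetSum _ _).trans (Finset.sup_le fun i _ => (totalDegree_X i).le)
  have hpair : (pairPoly σ).totalDegree ≤ 2 :=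
    (totalDegree_finsetSum _ _).trans <| Finset.sup_le fun i _ =>
      (totalDegree_finsetSum _ _).trans <| Finset.sup_le fun j _ =>
        (totalDegree_mul _ _).trans (by rw [totalDegree_X, totalDegree_X])
  have hlin : (C (2 * c - 1) * weightPoly σ).totalDegree ≤ 1 :=
    (totalDegree_mul _ _).trans (by rw [totalDegree_C]; omega)
  refine (totalDegree_sub _ _).trans (max_le ((totalDegree_add _ _).trans (max_le ?_ ?_)) hpair)
  · rw [totalDegree_C]; omega
  · omega

variable {σ}

omit [DecidableEq σ] in
theorem evalB_weightPoly (x : σ → Bool) : evalB x (weightPoly σ) = ∑ i, bval (x i) := by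
  simp only [evalB_eq_eval, weightPoly, map_sum, eval_X]

theorem evalB_pairPoly (x : σ → Bool) :
    evalB x (pairPoly σ) = (∑ i, bval (x i)) ^ 2 - ∑ i, bval (x i) := by
  have hsq (i : σ) : bval (x i) * bval (x i) = bval (x i) := by
    unfold bval; split_ifs <;> norm_num
  calc evalB x (pairPoly σ)
      = ∑ i, (bval (x i) * ∑ j, bval (x j) - bval (x i) * bval (x i)) := by
        simp only [evalB_eq_eval, pairPoly, map_sum, map_mul, map_sub, eval_X, ← mul_sum,
          sum_erase_eq_sub (mem_univ _)]
    _ = _ := by simp only [sum_sub_distrib, hsq, ← sum_mul, sq]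

theorem evalB_sliceSignPoly (x : σ → Bool) (c : ℝ) :
    evalB x (sliceSignPoly σ c) = 1 / 2 - (∑ i, bval (x i) - c) ^ 2 := by
  have hw := evalB_weightPoly x
  have hp := evalB_pairPoly x
  simp only [evalB_eq_eval, sliceSignPoly, map_add, map_sub, map_mul, eval_C] at hw hp ⊢
  rw [hw, hp]
  ring

end SlicePolynomial

section BooleanFunction

variable {n : ℕ} {f : (Fin n → Bool) → Bool}

theorem sdeg_le_totalDegree {p : MvPolynomial (Fin n) ℝ} (hp : Multilinear p)
    (hne : ∀ x, evalB x p ≠ 0) (hsign : ∀ x, evalB x p < 0 ↔ f x = true) :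
    sdeg f ≤ p.totalDegree :=
  Nat.sInf_le ⟨p, hp, hne, hsign, rfl⟩

theorem cast_wt_eq_sum_bval (x : Fin n → Bool) : (wt x : ℝ) = ∑ i, bval (x i) := by
  simp [wt, bval, sum_boole]

theorem one_le_sq_sub_of_ne {a b : ℕ} (h : a ≠ b) : (1 : ℝ) ≤ ((a : ℝ) - b) ^ 2 := by
  have h1 : (1 : ℤ) ≤ |(a : ℤ) - b| := Int.one_le_abs (by omega)
  rw [one_le_sq_iff_one_le_abs]
  exact_mod_cast h1

theorem sdeg_le_two_of_slice (c : ℕ) (hf : ∀ x, f x = false ↔ wt x = c) : sdeg f ≤ 2 := by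
  have hval (x : Fin n → Bool) :
      evalB x (sliceSignPoly (Fin n) c) = 1 / 2 - ((wt x : ℝ) - c) ^ 2 := by
    rw [evalB_sliceSignPoly, cast_wt_eq_sum_bval]
  refine (sdeg_le_totalDegree (multilinear_sliceSignPoly _ _) (fun x => ?_) (fun x => ?_)).trans
    (totalDegree_sliceSignPoly_le _ (c : ℝ))
  · rw [hval]
    rcases eq_or_ne (wt x) c with h | h
    · simp [h]
    · linarith [one_le_sq_sub_of_ne h]
  · rw [hval, ← Bool.not_eq_false, hf]
    refine ⟨fun hneg h => by norm_num [h] at hneg, fun h => ?_⟩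
    linarith [one_le_sq_sub_of_ne h]

theorem flipSet_empty (x : Fin n → Bool) : flipSet x ∅ = x := by
  funext i; simp [flipSet]

theorem card_le_of_disjoint_sensitive {k : ℕ} {x : Fin n → Bool}
    (Bs : Fin k → Finset (Fin n)) (hsens : ∀ i, f (flipSet x (Bs i)) ≠ f x)
    (hdisj : ∀ i j, i ≠ j → Disjoint (Bs i) (Bs j)) : k ≤ n := by
  have hne (i : Fin k) : (Bs i).Nonempty :=
    nonempty_iff_ne_empty.mpr fun h => hsens i (by rw [h, flipSet_empty])
  choose g hg using hne
  have hinj : Function.Injective g := fun i j hij => by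
    by_contra hij'
    exact disjoint_left.mp (hdisj i j hij') (hg i) (hij ▸ hg j)
  simpa using Fintype.card_le_of_injective g hinj

theorem le_bs {k : ℕ} {x : Fin n → Bool} (Bs : Fin k → Finset (Fin n))
    (hsens : ∀ i, f (flipSet x (Bs i)) ≠ f x)
    (hdisj : ∀ i j, i ≠ j → Disjoint (Bs i) (Bs j)) : k ≤ bs f x :=
  le_csSup ⟨n, fun _ ⟨Bs, hs, hd⟩ => card_le_of_disjoint_sensitive Bs hs hd⟩
    ⟨Bs, hsens, hdisj⟩

theorem card_le_bs_of_forall_sensitive {x : Fin n → Bool}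
    (h : ∀ i, f (flipSet x {i}) ≠ f x) : n ≤ bs f x := by
  simpa using le_bs (fun i => {i}) h fun i j hij => disjoint_singleton.mpr hij

theorem wt_flipSet_singleton_ne (x : Fin n → Bool) (i : Fin n) :
    wt (flipSet x {i}) ≠ wt x := by
  have hsplit (y : Fin n → Bool) : wt y =
      (if y i = true then 1 else 0) + ∑ j ∈ univ.erase i, if y j = true then 1 else 0 := by
    rw [wt, card_filter, ← add_sum_erase _ _ (mem_univ i)]
  have hrest : ∑ j ∈ univ.erase i, (if flipSet x {i} j = true then 1 else 0) =
      ∑ j ∈ univ.erase i, if x j = true then 1 else 0 :=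
    sum_congr rfl fun j hj => by simp [flipSet, ne_of_mem_erase hj]
  rw [hsplit, hsplit x, hrest]
  cases hx : x i <;> simp [flipSet, hx]

theorem wt_decide_lt {k : ℕ} (h : k ≤ n) :
    wt (fun i : Fin n => decide ((i : ℕ) < k)) = k := by
  simp [wt, Fin.card_filter_val_lt, h]

theorem card_le_bs_of_slice (c : ℕ) (hf : ∀ x, f x = false ↔ wt x = c) {z : Fin n → Bool}
    (hz : wt z = c) : n ≤ bs f z :=
  card_le_bs_of_forall_sensitive fun i h =>
    wt_flipSet_singleton_ne z i (by rw [hz, ← hf, h, hf, hz])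

end BooleanFunction

theorem stmt_19_general (n : ℕ) (f : (Fin n → Bool) → Bool)
    (hf : ∀ x : Fin n → Bool, f x = false ↔ wt x = n / 2) :
    sdeg f ≤ 2 ∧ n ≤ bs f (fun i => decide ((i : ℕ) < n / 2)) :=
  ⟨sdeg_le_two_of_slice _ hf, card_le_bs_of_slice _ hf (wt_decide_lt (Nat.div_le_self n 2))⟩

/-- For even n, the function f with f(x) = 0 iff |x| = n/2 has sdeg(f) ≤ 2, but block
sensitivity at least n at the point z = 1^{n/2}0^{n/2} (so max_x bs_x(f) ≥ n). -/
theorem stmt_19 (n : ℕ) (hn : Even n) (f : (Fin n → Bool) → Bool)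
    (hf : ∀ x : Fin n → Bool, f x = false ↔ wt x = n / 2) :
    sdeg f ≤ 2 ∧ n ≤ bs f (fun i => decide ((i : ℕ) < n / 2)) :=
  stmt_19_general n f hf
end
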